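/- arXiv:1702.00482 — 2 statements merged into one kernel-verified Lean document; each statement's English description precedes it below -/
import Mathlib

section
/- Let X be a real-valued random variable with mean μ and variance σ², and let δ ∈ (0,1). Partition an i.i.d. sample X_1,...,X_N into k = ⌈8 log(1/δ)⌉ blocks of equal size, compute the sample mean within each block, and let μ̂ be the median of these block means. Then with probability at least 1 − δ, |μ̂ − μ| ≤ 8σ sqrt(log(2/δ)/N). -/
/-!
By Chebyshev's inequality each block mean deviates from `μ` by more than
`ε = 8σ √(log(2/δ)/N)` with probability at most `q = k / (64 log(2/δ)) ≤ 1/8`. If the median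
deviates by more than `ε`, then so do at least half of the `k` independent block means, and
Hoeffding's inequality bounds the probability of that by `exp(-2k(1/2 - q)²) ≤ exp(-9k/32) ≤ δ`.
-/

open MeasureTheory ProbabilityTheory Measure Finset Real

section

variable {Ω : Type*} [MeasurableSpace Ω] {P : Measure Ω}

lemma ProbabilityTheory.iIndepFun.curry₀ {ι κ 𝓧 : Type*} [Countable ι] [Countable κ]
    [MeasurableSpace 𝓧] {X : ι × κ → Ω → 𝓧} (hX : ∀ p, AEMeasurable (X p) P) (h : iIndepFun X P) :
    iIndepFun (fun i ω j ↦ X (i, j) ω) P := by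
  have := h.isProbabilityMeasure
  have hblock : ∀ i, AEMeasurable (fun ω j ↦ X (i, j) ω) P :=
    fun i ↦ aemeasurable_pi_iff.2 fun j ↦ hX (i, j)
  have : ∀ p, IsProbabilityMeasure (P.map (X p)) := fun p ↦ isProbabilityMeasure_map (hX p)
  rw [iIndepFun_iff_map_fun_eq_infinitePi_map₀' hblock]
  have hjoint : AEMeasurable (fun ω p ↦ X p ω) P := aemeasurable_pi_iff.2 hX
  calc P.map (fun ω i j ↦ X (i, j) ω)
      = (P.map fun ω p ↦ X p ω).map (MeasurableEquiv.curry ι κ 𝓧) := by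
        rw [AEMeasurable.map_map_of_aemeasurable (by fun_prop) hjoint]; rfl
    _ = infinitePi fun i ↦ infinitePi fun j ↦ P.map (X (i, j)) := by
        rw [h.map_fun_eq_infinitePi_map₀' hX]
        exact infinitePi_map_curry fun i j ↦ P.map (X (i, j))
    _ = infinitePi fun i ↦ P.map (fun ω j ↦ X (i, j) ω) := by
        congr 1; funext i
        exact ((h.precomp (Prod.mk_right_injective i)).map_fun_eq_infinitePi_map₀'
          fun j ↦ hX (i, j)).symm

lemma ProbabilityTheory.iIndepFun.average_blocks {ι κ : Type*} [Countable ι] [Fintype κ]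
    {X : ι × κ → Ω → ℝ} (hX : ∀ p, AEMeasurable (X p) P) (h : iIndepFun X P) :
    iIndepFun (fun i ω ↦ (Fintype.card κ : ℝ)⁻¹ * ∑ j, X (i, j) ω) P :=
  (h.curry₀ hX).comp (fun _ v ↦ (Fintype.card κ : ℝ)⁻¹ * ∑ j, v j) fun _ ↦ by fun_prop

lemma integral_average {ι : Type*} [Fintype ι] [Nonempty ι] {X : ι → Ω → ℝ}
    (hint : ∀ i, Integrable (X i) P) {c : ℝ} (hc : ∀ i, P[X i] = c) :
    P[fun ω ↦ (Fintype.card ι : ℝ)⁻¹ * ∑ i, X i ω] = c := by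
  rw [integral_const_mul, integral_finsetSum _ fun i _ ↦ hint i]
  simp [hc]

lemma variance_average {ι : Type*} [Fintype ι] {X : ι → Ω → ℝ}
    (hX : ∀ i, MemLp (X i) 2 P) (hind : Pairwise fun i j ↦ X i ⟂ᵢ[P] X j) {v : ℝ}
    (hv : ∀ i, variance (X i) P = v) :
    variance (fun ω ↦ (Fintype.card ι : ℝ)⁻¹ * ∑ i, X i ω) P = v / Fintype.card ι := by
  have hsum : variance (∑ i, X i) P = ∑ i, variance (X i) P :=
    IndepFun.variance_sum (fun i _ ↦ hX i) fun i _ j _ hij ↦ hind hij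
  simp_rw [← Finset.sum_apply]
  rw [variance_const_mul, hsum]
  simp only [hv, sum_const, card_univ, nsmul_eq_mul]
  rcases eq_or_ne (Fintype.card ι : ℝ) 0 with h | h
  · simp [h]
  · field_simp

lemma measureReal_lt_abs_sub_integral_le [IsFiniteMeasure P] {X : Ω → ℝ} (hX : MemLp X 2 P)
    {ε q : ℝ} (hε : 0 ≤ ε) (hq : 0 ≤ q) (hvar : variance X P ≤ q * ε ^ 2) :
    P.real {ω | ε < |X ω - P[X]|} ≤ q := by
  rcases hε.eq_or_lt with rfl | hε
  · have hconst := ae_eq_integral_of_variance_eq_zero hX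
      (le_antisymm (by simpa using hvar) (variance_nonneg X P))
    have hnull : P {ω | 0 < |X ω - P[X]|} = 0 := by
      refine measure_mono_null (fun ω hω ↦ ?_) (ae_iff.1 hconst)
      simpa [sub_eq_zero] using hω
    rw [measureReal_def, hnull]
    exact hq
  · calc P.real {ω | ε < |X ω - P[X]|}
        ≤ P.real {ω | ε ≤ |X ω - P[X]|} := measureReal_mono fun ω (hω : ε < _) ↦ hω.le
      _ ≤ variance X P / ε ^ 2 := by
        rw [measureReal_def]
        exact ENNReal.toReal_le_of_le_ofReal (div_nonneg (variance_nonneg X P) (by positivity))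
          (meas_ge_le_variance_div_sq hX hε)
      _ ≤ q := by rwa [div_le_iff₀ (by positivity)]

lemma measureReal_lt_abs_average_sub_le [IsFiniteMeasure P] {ι : Type*} [Fintype ι]
    [Nonempty ι] {X : ι → Ω → ℝ} (hX : ∀ i, MemLp (X i) 2 P)
    (hind : Pairwise fun i j ↦ X i ⟂ᵢ[P] X j) {μ v : ℝ} (hμ : ∀ i, P[X i] = μ)
    (hv : ∀ i, variance (X i) P = v) {ε q : ℝ} (hε : 0 ≤ ε) (hq : 0 ≤ q)
    (hvq : v / Fintype.card ι ≤ q * ε ^ 2) :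
    P.real {ω | ε < |(Fintype.card ι : ℝ)⁻¹ * ∑ i, X i ω - μ|} ≤ q := by
  have hmean := integral_average (fun i ↦ (hX i).integrable one_le_two) hμ
  rw [← hmean]
  refine measureReal_lt_abs_sub_integral_le ?_ hε hq (variance_average hX hind hv ▸ hvq)
  simpa using (memLp_finsetSum univ fun i _ ↦ hX i).const_mul (Fintype.card ι : ℝ)⁻¹

lemma measureReal_card_mul_le_sum_le_of_iIndepFun {ι : Type*} [Fintype ι] [IsProbabilityMeasure P]
    {W : ι → Ω → ℝ} (hind : iIndepFun W P) (hmeas : ∀ i, AEMeasurable (W i) P)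
    (hW : ∀ i, ∀ᵐ ω ∂P, W i ω ∈ Set.Icc 0 1) {p t : ℝ} (hp : ∀ i, P[W i] ≤ p) (hpt : p ≤ t) :
    P.real {ω | Fintype.card ι * t ≤ ∑ i, W i ω}
      ≤ exp (-2 * Fintype.card ι * (t - p) ^ 2) := by
  set n : ℝ := (Fintype.card ι : ℝ)
  have hcentered : iIndepFun (fun i ω ↦ W i ω - P[W i]) P :=
    hind.comp (fun i y ↦ y - ∫ ω, W i ω ∂P) fun i ↦ measurable_id.sub_const _
  have hsubG : ∀ i ∈ (univ : Finset ι),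
      HasSubgaussianMGF (fun ω ↦ W i ω - P[W i]) ((‖(1 : ℝ) - 0‖₊ / 2) ^ 2) P :=
    fun i _ ↦ hasSubgaussianMGF_of_mem_Icc (hmeas i) (hW i)
  have hhoeffding := HasSubgaussianMGF.measure_sum_ge_le_of_iIndepFun hcentered hsubG
    (ε := n * (t - p)) (mul_nonneg (by positivity) (sub_nonneg.2 hpt))
  have hmean : ∑ i, P[W i] ≤ n * p := by
    simpa [n] using sum_le_sum fun i (_ : i ∈ univ) ↦ hp i
  calc P.real {ω | n * t ≤ ∑ i, W i ω}
      ≤ P.real {ω | n * (t - p) ≤ ∑ i, (W i ω - P[W i])} := by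
        refine measureReal_mono (fun ω (hω : n * t ≤ _) ↦ ?_)
        simp only [Set.mem_ofPred_eq, sum_sub_distrib]
        linarith
    _ ≤ _ := hhoeffding
    _ = exp (-2 * n * (t - p) ^ 2) := by
        have hc : ((∑ _i : ι, (‖(1 : ℝ) - 0‖₊ / 2) ^ 2 : NNReal) : ℝ) = n / 4 := by
          norm_num [n]; ring
        rw [hc]
        congr 1
        rcases eq_or_ne n 0 with hn | hn
        · simp [hn]
        · field_simp
          ring

lemma card_le_two_mul_card_lt_abs_sub {ι : Type*} [Fintype ι] {z : ι → ℝ} {a c ε : ℝ}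
    (hle : Fintype.card ι ≤ 2 * #{j | z j ≤ a}) (hge : Fintype.card ι ≤ 2 * #{j | a ≤ z j})
    (h : ε < |a - c|) :
    Fintype.card ι ≤ 2 * #{j | ε < |z j - c|} := by
  rcases lt_abs.1 h with h | h
  · refine hge.trans (Nat.mul_le_mul_left 2 (card_le_card fun j hj ↦ ?_))
    simp only [mem_filter, mem_univ, true_and] at hj ⊢
    exact h.trans_le ((sub_le_sub_right hj c).trans (le_abs_self _))
  · refine hle.trans (Nat.mul_le_mul_left 2 (card_le_card fun j hj ↦ ?_))
    simp only [mem_filter, mem_univ, true_and] at hj ⊢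
    exact h.trans_le ((by linarith : -(a - c) ≤ -(z j - c)).trans (neg_le_abs _))

lemma measureReal_lt_abs_median_sub_le {ι : Type*} [Fintype ι] [IsProbabilityMeasure P]
    {Z : ι → Ω → ℝ} (hind : iIndepFun Z P) (hmeas : ∀ j, AEMeasurable (Z j) P) {med : Ω → ℝ}
    (hmed : ∀ ω, Fintype.card ι ≤ 2 * #{j | Z j ω ≤ med ω} ∧
      Fintype.card ι ≤ 2 * #{j | med ω ≤ Z j ω})
    {c ε q : ℝ} (hq : ∀ j, P.real {ω | ε < |Z j ω - c|} ≤ q) (hq_half : q ≤ 1 / 2) :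
    P.real {ω | ε < |med ω - c|} ≤ exp (-2 * Fintype.card ι * (1 / 2 - q) ^ 2) := by
  set g : ℝ → ℝ := fun x ↦ if ε < |x - c| then 1 else 0
  have hg : Measurable g :=
    Measurable.ite (measurableSet_lt measurable_const (measurable_id.sub_const c).abs)
      measurable_const measurable_const
  have hmean : ∀ j, P[g ∘ Z j] ≤ q := fun j ↦ by
    have hA : NullMeasurableSet {ω | ε < |Z j ω - c|} P :=
      nullMeasurableSet_lt aemeasurable_const ((hmeas j).sub_const c).abs
    have : g ∘ Z j = Set.indicator {ω | ε < |Z j ω - c|} 1 := by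
      ext ω; simp [g, Set.indicator_apply]
    rw [this, integral_indicator₀ hA]
    simpa using hq j
  have hhoeffding := measureReal_card_mul_le_sum_le_of_iIndepFun (hind.comp (fun _ ↦ g) fun _ ↦ hg)
    (fun j ↦ hg.comp_aemeasurable (hmeas j))
    (fun j ↦ ae_of_all _ fun ω ↦ by by_cases h : ε < |Z j ω - c| <;> simp [g, h])
    hmean hq_half
  refine (measureReal_mono fun ω hω ↦ ?_).trans hhoeffding
  have hcard := card_le_two_mul_card_lt_abs_sub (hmed ω).1 (hmed ω).2 hω
  simp only [Set.mem_ofPred_eq, Function.comp_apply, g, sum_boole]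
  have : (Fintype.card ι : ℝ) ≤ 2 * #{j | ε < |Z j ω - c|} := by exact_mod_cast hcard
  linarith

lemma natCeil_eight_mul_log_inv_le {δ : ℝ} (hδ0 : 0 < δ) (hδ1 : δ ≤ 1) :
    (⌈8 * log (1 / δ)⌉₊ : ℝ) ≤ 8 * log (2 / δ) := by
  have hlog : 0 ≤ log (1 / δ) := log_nonneg (one_le_one_div hδ0 hδ1)
  have hsplit : log (2 / δ) = log 2 + log (1 / δ) := by
    rw [← log_mul two_ne_zero (by positivity)]; ring_nf
  have := log_two_gt_d9
  have := Nat.ceil_lt_add_one (by positivity : 0 ≤ 8 * log (1 / δ))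
  linarith

lemma exp_neg_two_mul_half_sub_sq_le {δ k q : ℝ} (hδ0 : 0 < δ) (hδ1 : δ ≤ 1)
    (hk : 8 * log (1 / δ) ≤ k) (hq : q ≤ 1 / 8) :
    exp (-2 * k * (1 / 2 - q) ^ 2) ≤ δ := by
  have hlog : 0 ≤ log (1 / δ) := log_nonneg (one_le_one_div hδ0 hδ1)
  have hsq : (3 / 8 : ℝ) ^ 2 ≤ (1 / 2 - q) ^ 2 := pow_le_pow_left₀ (by norm_num) (by linarith) 2
  calc exp (-2 * k * (1 / 2 - q) ^ 2) ≤ exp (-log (1 / δ)) := by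
        gcongr
        nlinarith
    _ = δ := by rw [one_div, log_inv, neg_neg, exp_log hδ0]

lemma ofReal_one_sub_le_of_measureReal_compl_le [IsProbabilityMeasure P] {s : Set Ω} {δ : ℝ}
    (h : P.real sᶜ ≤ δ) : ENNReal.ofReal (1 - δ) ≤ P s := by
  have hcover : 1 ≤ P.real s + P.real sᶜ := by
    simpa using measureReal_union_le (μ := P) s sᶜ
  rw [← ofReal_measureReal]
  exact ENNReal.ofReal_le_ofReal (by linarith)

end

theorem median_of_means_real_general
    {Ω : Type*} [MeasurableSpace Ω] (P : Measure Ω) [IsProbabilityMeasure P]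
    (δ : ℝ) (hδ : δ ∈ Set.Ioo (0 : ℝ) 1)
    (k m N : ℕ) (hk : k = ⌈8 * Real.log (1 / δ)⌉₊) (hm : 0 < m) (hN : N = k * m)
    (X : Fin k × Fin m → Ω → ℝ)
    (hindep : iIndepFun X P)
    (hL2 : ∀ i, MemLp (X i) 2 P)
    (μ σ : ℝ) (hσ : 0 ≤ σ)
    (hμ : ∀ i, μ = ∫ ω, X i ω ∂P)
    (hvar : ∀ i, σ ^ 2 = ∫ ω, (X i ω - μ) ^ 2 ∂P)
    (Z : Fin k → Ω → ℝ) (hZ : ∀ j ω, Z j ω = (m : ℝ)⁻¹ * ∑ i : Fin m, X (j, i) ω)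
    (muhat : Ω → ℝ)
    (hmed : ∀ ω, 2 * (Finset.univ.filter fun j : Fin k => Z j ω ≤ muhat ω).card ≥ k ∧
                 2 * (Finset.univ.filter fun j : Fin k => muhat ω ≤ Z j ω).card ≥ k) :
    P {ω | |muhat ω - μ| ≤ 8 * σ * Real.sqrt (Real.log (2 / δ) / N)}
      ≥ ENNReal.ofReal (1 - δ) := by
  obtain ⟨hδ0, hδ1⟩ := hδ
  have hL : 0 < log (2 / δ) := log_pos (by rw [lt_div_iff₀ hδ0]; linarith)
  have hkpos : 0 < k :=
    hk ▸ Nat.ceil_pos.2 (by have := log_pos (one_lt_one_div hδ0 hδ1); positivity)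
  have hXmeas : ∀ i, AEMeasurable (X i) P := fun i ↦ (hL2 i).aemeasurable
  have hXvar : ∀ i, variance (X i) P = σ ^ 2 := fun i ↦ by
    rw [variance_eq_integral (hXmeas i), ← hμ i, hvar i]
  have hZ_eq : Z = fun j ω ↦ (Fintype.card (Fin m) : ℝ)⁻¹ * ∑ i, X (j, i) ω := by
    ext j ω; simp [hZ]
  have hZmeas : ∀ j, AEMeasurable (Z j) P := fun j ↦ by rw [hZ_eq]; fun_prop
  set q : ℝ := k / (64 * log (2 / δ))
  have hq : q ≤ 1 / 8 := by
    rw [div_le_iff₀ (by positivity)]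
    linarith [hk ▸ natCeil_eight_mul_log_inv_le hδ0 hδ1.le]
  have hdev : ∀ j, P.real {ω | 8 * σ * sqrt (log (2 / δ) / N) < |Z j ω - μ|} ≤ q := fun j ↦ by
    have : Nonempty (Fin m) := ⟨⟨0, hm⟩⟩
    rw [hZ_eq]
    refine measureReal_lt_abs_average_sub_le (fun i ↦ hL2 (j, i))
      (fun i i' hii' ↦ hindep.indepFun ((Prod.mk_right_injective j).ne hii'))
      (fun i ↦ (hμ (j, i)).symm) (fun i ↦ hXvar (j, i)) (by positivity) (by positivity)
      (le_of_eq ?_)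
    rw [mul_pow, mul_pow, sq_sqrt (by positivity), hN, Fintype.card_fin]
    simp only [q]
    push_cast
    field_simp
    ring
  apply ofReal_one_sub_le_of_measureReal_compl_le
  simp only [Set.compl_ofPred, not_le]
  refine (measureReal_lt_abs_median_sub_le (hZ_eq ▸ hindep.average_blocks hXmeas) hZmeas
    (fun ω ↦ by simpa using hmed ω) hdev (by linarith)).trans ?_
  exact exp_neg_two_mul_half_sub_sq_le hδ0 hδ1.le (by simpa [hk] using Nat.le_ceil _) hq

/-- One-dimensional median-of-means: with `k = ⌈8 log(1/δ)⌉` blocks of size `m = N/k`,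
the median `μ̂` of the block means `Z j` satisfies, with probability at least `1 − δ`,
`|μ̂ − μ| ≤ 8σ √(log(2/δ)/N)`. -/
theorem median_of_means_real
    {Ω : Type*} [MeasurableSpace Ω] (P : Measure Ω) [IsProbabilityMeasure P]
    (δ : ℝ) (hδ : δ ∈ Set.Ioo (0 : ℝ) 1)
    (k m N : ℕ) (hk : k = ⌈8 * Real.log (1 / δ)⌉₊) (hm : 0 < m) (hN : N = k * m)
    (X : Fin k × Fin m → Ω → ℝ)
    (hindep : iIndepFun X P)
    (hident : ∀ i j, IdentDistrib (X i) (X j) P P)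
    (hL2 : ∀ i, MemLp (X i) 2 P)
    (μ σ : ℝ) (hσ : 0 ≤ σ)
    (hμ : ∀ i, μ = ∫ ω, X i ω ∂P)
    (hvar : ∀ i, σ ^ 2 = ∫ ω, (X i ω - μ) ^ 2 ∂P)
    (Z : Fin k → Ω → ℝ) (hZ : ∀ j ω, Z j ω = (m : ℝ)⁻¹ * ∑ i : Fin m, X (j, i) ω)
    (muhat : Ω → ℝ) (hmeas : Measurable muhat)
    (hmed : ∀ ω, 2 * (Finset.univ.filter fun j : Fin k => Z j ω ≤ muhat ω).card ≥ k ∧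
                 2 * (Finset.univ.filter fun j : Fin k => muhat ω ≤ Z j ω).card ≥ k) :
    P {ω | |muhat ω - μ| ≤ 8 * σ * Real.sqrt (Real.log (2 / δ) / N)}
      ≥ ENNReal.ofReal (1 - δ) :=
  median_of_means_real_general P δ hδ k m N hk hm hN X hindep hL2 μ σ hσ hμ hvar Z hZ muhat hmed
end

section
/- Let Z_1,...,Z_k ∈ R^d and define S_a as above. The function a ↦ diam(S_a^c) is continuous on R^d, and consequently the minimum of diam(S_a^c) over a ∈ R^d is attained. -/
/-!
Write `C(a, t)` for the set of points `x` with `‖Z j - x‖ ≤ ‖Z j - a‖ + t` for at least half of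
the indices `j`, so that `C(a, 0) = (S a)ᶜ`. Moving `a` by `r` keeps `C(a, 0)` between `C(a, -r)`
and `C(a, r)`, so continuity of `a ↦ diam C(a, 0)` reduces to continuity of `t ↦ diam C(a, t)` at
`t = 0`. From above this holds because the compact sets `C(a, t)`, `t > 0`, decrease to
`C(a, 0)`. From below, strict convexity of the norm puts every open segment from `a` to a point of
`C(a, 0)` inside some `C(a, -ε)`, so `C(a, 0)` lies in the closure of `⋃ ε > 0, C(a, -ε)` unless
it is `{a}`. Finally `Z j ∈ C(a, 0)` once `a` is far away, so `diam C(a, 0) ≥ dist a (Z j)` is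
coercive and the continuous function attains its minimum.
-/

open Metric Bornology Filter Topology

section Diam

variable {X : Type*} [MetricSpace X]

theorem exists_diam_le_diam_iInter_add {K : ℕ → Set X} (hK : Antitone K)
    (hc : ∀ n, IsCompact (K n)) {δ : ℝ} (hδ : 0 < δ) :
    ∃ n, diam (K n) ≤ diam (⋂ n, K n) + δ := by
  set D := diam (⋂ n, K n)
  have hb : IsBounded (⋂ n, K n) := (hc 0).isBounded.subset (Set.iInter_subset K 0)
  set L : ℕ → Set (X × X) := fun n => K n ×ˢ K n ∩ {p | D + δ ≤ dist p.1 p.2}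
  have hL : ∀ n, IsClosed (L n) := fun n =>
    ((hc n).isClosed.prod (hc n).isClosed).inter (isClosed_le continuous_const continuous_dist)
  have hLempty : (K 0 ×ˢ K 0) ∩ ⋂ n, L n = ∅ := by
    refine Set.eq_empty_of_forall_notMem fun p ⟨_, hp⟩ => ?_
    simp only [Set.mem_iInter, L, Set.mem_inter_iff, Set.mem_prod, Set.mem_ofPred_eq] at hp
    have := dist_le_diam_of_mem hb (Set.mem_iInter.2 fun n => (hp n).1.1)
      (Set.mem_iInter.2 fun n => (hp n).1.2)
    linarith [(hp 0).2]
  have hdir : Directed (· ⊇ ·) L := fun m n =>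
    ⟨max m n,
      fun _ ⟨hp, hpd⟩ => ⟨Set.prod_mono (hK (le_max_left m n)) (hK (le_max_left m n)) hp, hpd⟩,
      fun _ ⟨hp, hpd⟩ => ⟨Set.prod_mono (hK (le_max_right m n)) (hK (le_max_right m n)) hp, hpd⟩⟩
  obtain ⟨n, hn⟩ := ((hc 0).prod (hc 0)).elim_directed_family_closed L hL hLempty hdir
  refine ⟨n, diam_le_of_forall_dist_le (by linarith [diam_nonneg (s := ⋂ n, K n)])
    fun x hx y hy => ?_⟩
  by_contra! hxy
  have hsub := hK (Nat.zero_le n)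
  exact Set.eq_empty_iff_forall_notMem.1 hn (x, y) ⟨⟨hsub hx, hsub hy⟩, ⟨hx, hy⟩, hxy.le⟩

theorem exists_diam_iUnion_le_diam_add {K : ℕ → Set X} (hK : Monotone K)
    (hb : IsBounded (⋃ n, K n)) {δ : ℝ} (hδ : 0 < δ) :
    ∃ n, diam (⋃ n, K n) ≤ diam (K n) + δ := by
  by_contra! h
  have hle : diam (⋃ n, K n) ≤ diam (⋃ n, K n) - δ := by
    refine diam_le_of_forall_dist_le (by linarith [h 0, diam_nonneg (s := K 0)])
      fun x hx y hy => ?_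
    obtain ⟨m, hxm⟩ := Set.mem_iUnion.1 hx
    obtain ⟨n, hyn⟩ := Set.mem_iUnion.1 hy
    have hmax := dist_le_diam_of_mem (hb.subset (Set.subset_iUnion K (max m n)))
      (hK (le_max_left m n) hxm) (hK (le_max_right m n) hyn)
    linarith [h (max m n)]
  linarith

end Diam

section HalfCloserSet

variable {ι X : Type*} [Fintype ι] [MetricSpace X]

def halfCloserSet (Z : ι → X) (a : X) (t : ℝ) : Set X :=
  {x | ∃ T : Finset ι, Fintype.card ι ≤ 2 * T.card ∧ ∀ j ∈ T, dist (Z j) x ≤ dist (Z j) a + t}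

variable (Z : ι → X)

theorem mem_halfCloserSet_zero_iff {a x : X} :
    x ∈ halfCloserSet Z a 0 ↔
      ¬ ∃ J : Finset ι, Fintype.card ι < 2 * J.card ∧ ∀ j ∈ J, dist (Z j) a < dist (Z j) x := by
  classical
  simp only [halfCloserSet, add_zero, Set.mem_ofPred_eq]
  constructor
  · rintro ⟨T, hT, hTx⟩ ⟨J, hJ, hJx⟩
    have hdisj : Disjoint J T :=
      Finset.disjoint_left.2 fun j hjJ hjT => (hJx j hjJ).not_ge (hTx j hjT)
    have := Finset.card_le_univ (J ∪ T)
    rw [Finset.card_union_of_disjoint hdisj] at this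
    omega
  · intro h
    set closer := fun j => dist (Z j) x ≤ dist (Z j) a
    refine ⟨Finset.univ.filter closer, ?_, fun j hj => (Finset.mem_filter.1 hj).2⟩
    have hfarther : ¬ Fintype.card ι < 2 * (Finset.univ.filter fun j => ¬ closer j).card :=
      fun hlt => h ⟨_, hlt, fun j hj => not_le.1 (Finset.mem_filter.1 hj).2⟩
    have := Finset.card_filter_add_card_filter_not (s := Finset.univ) closer
    rw [Finset.card_univ] at this
    omega

theorem halfCloserSet_eq_univ_of_isEmpty [IsEmpty ι] (a : X) (t : ℝ) :
    halfCloserSet Z a t = Set.univ :=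
  Set.eq_univ_of_forall fun _ => ⟨∅, by simp, by simp⟩

theorem self_mem_halfCloserSet_zero (a : X) : a ∈ halfCloserSet Z a 0 :=
  ⟨Finset.univ, by rw [Finset.card_univ]; omega, fun _ _ => by rw [add_zero]⟩

theorem halfCloserSet_mono (a : X) : Monotone (halfCloserSet Z a) :=
  fun _ _ hst _ ⟨T, hT, hTx⟩ => ⟨T, hT, fun j hj => (hTx j hj).trans (by linarith)⟩

theorem halfCloserSet_subset_add_dist (a a' : X) (t : ℝ) :
    halfCloserSet Z a' t ⊆ halfCloserSet Z a (t + dist a a') := fun _ ⟨T, hT, hTx⟩ =>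
  ⟨T, hT, fun j hj => by linarith [hTx j hj, dist_triangle (Z j) a a']⟩

theorem isClosed_halfCloserSet (a : X) (t : ℝ) : IsClosed (halfCloserSet Z a t) := by
  have : halfCloserSet Z a t = ⋃ T ∈ {T : Finset ι | Fintype.card ι ≤ 2 * T.card},
      ⋂ j ∈ T, closedBall (Z j) (dist (Z j) a + t) := by
    ext x
    simp [halfCloserSet, dist_comm]
  rw [this]
  exact (Set.toFinite _).isClosed_biUnion fun _ _ => isClosed_biInter fun _ _ => isClosed_closedBall

theorem isBounded_halfCloserSet [Nonempty ι] (a : X) (t : ℝ) :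
    IsBounded (halfCloserSet Z a t) := by
  refine (isBounded_iUnion.2 fun j =>
    isBounded_closedBall (x := Z j) (r := dist (Z j) a + t)).subset ?_
  rintro x ⟨T, hT, hTx⟩
  obtain ⟨j, hj⟩ : T.Nonempty :=
    Finset.card_pos.1 (by have := Fintype.card_pos (α := ι); omega)
  exact Set.mem_iUnion.2 ⟨j, by rw [mem_closedBall, dist_comm]; exact hTx j hj⟩

theorem isCompact_halfCloserSet [ProperSpace X] [Nonempty ι] (a : X) (t : ℝ) :
    IsCompact (halfCloserSet Z a t) :=
  isCompact_of_isClosed_isBounded (isClosed_halfCloserSet Z a t) (isBounded_halfCloserSet Z a t)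

theorem iInter_halfCloserSet_one_div (a : X) :
    ⋂ n : ℕ, halfCloserSet Z a (1 / (n + 1)) = halfCloserSet Z a 0 := by
  refine subset_antisymm (fun x hx => ?_)
    (Set.subset_iInter fun _ => halfCloserSet_mono Z a Nat.one_div_pos_of_nat.le)
  have hslack : ∀ᶠ n : ℕ in atTop, ∀ j, dist (Z j) x ≤ dist (Z j) a + 1 / (n + 1) →
      dist (Z j) x ≤ dist (Z j) a + 0 := by
    refine eventually_all.2 fun j => ?_
    rcases le_or_gt (dist (Z j) x) (dist (Z j) a) with hle | hlt
    · exact Eventually.of_forall fun _ _ => by rwa [add_zero]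
    · filter_upwards [tendsto_one_div_add_atTop_nhds_zero_nat.eventually
        (eventually_lt_nhds (sub_pos.2 hlt))] with n hn h
      linarith
  obtain ⟨n, hn⟩ := hslack.exists
  obtain ⟨T, hT, hTx⟩ := Set.mem_iInter.1 hx n
  exact ⟨T, hT, fun j hj => hn j (hTx j hj)⟩

theorem iUnion_halfCloserSet_neg_one_div_subset (a : X) :
    ⋃ n : ℕ, halfCloserSet Z a (-(1 / (n + 1))) ⊆ halfCloserSet Z a 0 :=
  Set.iUnion_subset fun _ => halfCloserSet_mono Z a (neg_nonpos.2 Nat.one_div_pos_of_nat.le)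

theorem monotone_halfCloserSet_neg_one_div (a : X) :
    Monotone fun n : ℕ => halfCloserSet Z a (-(1 / (n + 1))) :=
  fun _ _ hmn => halfCloserSet_mono Z a (neg_le_neg (Nat.one_div_le_one_div hmn))

theorem exists_diam_halfCloserSet_one_div_le [ProperSpace X] [Nonempty ι] (a : X) {δ : ℝ}
    (hδ : 0 < δ) :
    ∃ n : ℕ, diam (halfCloserSet Z a (1 / (n + 1))) ≤ diam (halfCloserSet Z a 0) + δ := by
  simpa only [iInter_halfCloserSet_one_div] using exists_diam_le_diam_iInter_add
    (fun _ _ hmn => halfCloserSet_mono Z a (Nat.one_div_le_one_div hmn))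
    (fun _ => isCompact_halfCloserSet Z a _) hδ

theorem diam_halfCloserSet_zero_le_of_dist_le [Nonempty ι] {a a' : X} {t : ℝ}
    (h : dist a a' ≤ t) : diam (halfCloserSet Z a' 0) ≤ diam (halfCloserSet Z a t) :=
  diam_mono ((halfCloserSet_subset_add_dist Z a a' 0).trans
    (halfCloserSet_mono Z a (by linarith))) (isBounded_halfCloserSet Z a t)

theorem diam_halfCloserSet_neg_le_of_dist_le [Nonempty ι] {a a' : X} {t : ℝ}
    (h : dist a a' ≤ t) : diam (halfCloserSet Z a (-t)) ≤ diam (halfCloserSet Z a' 0) :=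
  diam_mono ((halfCloserSet_subset_add_dist Z a' a (-t)).trans
    (halfCloserSet_mono Z a' (by rw [dist_comm]; linarith))) (isBounded_halfCloserSet Z a' 0)

theorem tendsto_diam_halfCloserSet_cocompact [ProperSpace X] [Nonempty ι] :
    Tendsto (fun a => diam (halfCloserSet Z a 0)) (cocompact X) atTop := by
  set c := Z (Classical.arbitrary ι)
  obtain ⟨R, hR⟩ := (isBounded_iff_subset_closedBall c).1 (Set.finite_range Z).isBounded
  have hfar : ∀ a, 2 * R ≤ dist c a → dist c a ≤ diam (halfCloserSet Z a 0) := fun a ha => by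
    have hc : c ∈ halfCloserSet Z a 0 :=
      ⟨Finset.univ, by rw [Finset.card_univ]; omega, fun j _ => by
        linarith [mem_closedBall.1 (hR (Set.mem_range_self j)), dist_triangle c (Z j) a,
          dist_comm c (Z j)]⟩
    exact dist_le_diam_of_mem (isBounded_halfCloserSet Z a 0) hc (self_mem_halfCloserSet_zero Z a)
  have hdist := tendsto_dist_left_cocompact_atTop c
  exact tendsto_atTop_mono' _ ((hdist.eventually_ge_atTop (2 * R)).mono hfar) hdist

end HalfCloserSet

section StrictConvex

variable {ι E : Type*} [Fintype ι] [NormedAddCommGroup E] [NormedSpace ℝ E]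
  [StrictConvexSpace ℝ E] (Z : ι → E)

theorem openSegment_subset_iUnion_halfCloserSet {a x : E} (hx : x ∈ halfCloserSet Z a 0)
    (hxa : x ≠ a) : openSegment ℝ a x ⊆ ⋃ n : ℕ, halfCloserSet Z a (-(1 / (n + 1))) := by
  intro y hy
  obtain ⟨T, hT, hTx⟩ := hx
  have hcloser : ∀ j ∈ T, dist (Z j) y < dist (Z j) a := fun j hj => by
    have hxj : x ∈ closedBall (Z j) (dist (Z j) a) := by
      rw [mem_closedBall, dist_comm, ← add_zero (dist _ a)]
      exact hTx j hj
    have hball := openSegment_subset_ball_of_ne (by rw [mem_closedBall, dist_comm]) hxj hxa.symm hy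
    rwa [mem_ball, dist_comm] at hball
  have hgap : ∀ᶠ n : ℕ in atTop, ∀ j ∈ T, 1 / ((n : ℝ) + 1) < dist (Z j) a - dist (Z j) y :=
    (eventually_all_finset T).2 fun j hj => tendsto_one_div_add_atTop_nhds_zero_nat.eventually
      (eventually_lt_nhds (sub_pos.2 (hcloser j hj)))
  obtain ⟨n, hn⟩ := hgap.exists
  exact Set.mem_iUnion.2 ⟨n, T, hT, fun j hj => by linarith [hn j hj]⟩

theorem halfCloserSet_zero_subset_closure_iUnion {a x : E} (hx : x ∈ halfCloserSet Z a 0)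
    (hxa : x ≠ a) :
    halfCloserSet Z a 0 ⊆ closure (⋃ n : ℕ, halfCloserSet Z a (-(1 / (n + 1)))) := by
  have hseg : ∀ y ∈ halfCloserSet Z a 0, y ≠ a →
      segment ℝ a y ⊆ closure (⋃ n : ℕ, halfCloserSet Z a (-(1 / (n + 1)))) :=
    fun y hy hya => by
      rw [← closure_openSegment]
      exact closure_mono (openSegment_subset_iUnion_halfCloserSet Z hy hya)
  intro y hy
  rcases eq_or_ne y a with rfl | hya
  · exact hseg x hx hxa (left_mem_segment ℝ y x)
  · exact hseg y hy hya (right_mem_segment ℝ a y)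

theorem exists_diam_halfCloserSet_zero_le [Nonempty ι] (a : E) {δ : ℝ} (hδ : 0 < δ) :
    ∃ n : ℕ, diam (halfCloserSet Z a 0) ≤ diam (halfCloserSet Z a (-(1 / (n + 1)))) + δ := by
  by_cases h : ∃ x ∈ halfCloserSet Z a 0, x ≠ a
  · obtain ⟨x, hx, hxa⟩ := h
    have hb := (isBounded_halfCloserSet Z a 0).subset (iUnion_halfCloserSet_neg_one_div_subset Z a)
    obtain ⟨n, hn⟩ :=
      exists_diam_iUnion_le_diam_add (monotone_halfCloserSet_neg_one_div Z a) hb hδ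
    refine ⟨n, le_trans ?_ hn⟩
    calc diam (halfCloserSet Z a 0)
        ≤ diam (closure (⋃ n : ℕ, halfCloserSet Z a (-(1 / (n + 1))))) :=
          diam_mono (halfCloserSet_zero_subset_closure_iUnion Z hx hxa) hb.closure
      _ = diam (⋃ n : ℕ, halfCloserSet Z a (-(1 / (n + 1)))) := diam_closure _
  · push Not at h
    rw [diam_subsingleton fun x hx y hy => (h x hx).trans (h y hy).symm]
    exact ⟨0, by positivity⟩

theorem continuous_diam_halfCloserSet [ProperSpace E] :
    Continuous fun a => diam (halfCloserSet Z a 0) := by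
  cases isEmpty_or_nonempty ι
  · simp only [halfCloserSet_eq_univ_of_isEmpty]
    exact continuous_const
  refine Metric.continuous_iff.2 fun a δ hδ => ?_
  obtain ⟨m, hm⟩ := exists_diam_halfCloserSet_one_div_le Z a (half_pos hδ)
  obtain ⟨n, hn⟩ := exists_diam_halfCloserSet_zero_le Z a (half_pos hδ)
  refine ⟨min (1 / (m + 1)) (1 / (n + 1)), by positivity, fun a' ha' => ?_⟩
  rw [dist_comm] at ha'
  have hup := diam_halfCloserSet_zero_le_of_dist_le Z (ha'.le.trans (min_le_left _ _))
  have hlow := diam_halfCloserSet_neg_le_of_dist_le Z (ha'.le.trans (min_le_right _ _))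
  rw [Real.dist_eq, abs_sub_lt_iff]
  constructor <;> linarith

theorem exists_forall_diam_halfCloserSet_le [ProperSpace E] :
    ∃ a₀, ∀ a, diam (halfCloserSet Z a₀ 0) ≤ diam (halfCloserSet Z a 0) := by
  cases isEmpty_or_nonempty ι
  · exact ⟨0, fun a => by simp only [halfCloserSet_eq_univ_of_isEmpty, le_refl]⟩
  · exact (continuous_diam_halfCloserSet Z).exists_forall_le
      (tendsto_diam_halfCloserSet_cocompact Z)

end StrictConvex

/-- The function `a ↦ diam((S a)ᶜ)` is continuous, and its minimum over `a ∈ ℝ^d` is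
attained. -/
theorem diam_compl_Sa_continuous_and_min {d k : ℕ}
    (Z : Fin k → EuclideanSpace ℝ (Fin d))
    (S : EuclideanSpace ℝ (Fin d) → Set (EuclideanSpace ℝ (Fin d)))
    (hS : ∀ a, S a = {x | ∃ J : Finset (Fin k), 2 * J.card > k ∧
      ∀ j ∈ J, ‖Z j - a‖ < ‖Z j - x‖}) :
    Continuous (fun a => Metric.diam (S a)ᶜ) ∧
    ∃ a₀ : EuclideanSpace ℝ (Fin d), ∀ a, Metric.diam (S a₀)ᶜ ≤ Metric.diam (S a)ᶜ := by
  have hcompl : ∀ a, (S a)ᶜ = halfCloserSet Z a 0 := fun a => by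
    ext x
    simp only [hS, Set.mem_compl_iff, Set.mem_ofPred_eq, mem_halfCloserSet_zero_iff,
      Fintype.card_fin, dist_eq_norm, gt_iff_lt]
  simp only [hcompl]
  exact ⟨continuous_diam_halfCloserSet Z, exists_forall_diam_halfCloserSet_le Z⟩
end
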